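/- arXiv:2212.08342 — 3 statements merged into one kernel-verified Lean document; each statement's English description precedes it below -/
import Mathlib

section
/- Let F be a Banach lattice. If every continuous operator T : ℓ¹ → F is an unbounded Banach-Saks operator, then F' has order continuous norm. -/
open Filter Topology MeasureTheory

section Defs

variable {E F G : Type*} [NormedAddCommGroup E] [Lattice E] [HasSolidNorm E] [IsOrderedAddMonoid E] [NormedSpace ℝ E]
  [NormedAddCommGroup F] [Lattice F] [HasSolidNorm F] [IsOrderedAddMonoid F] [NormedSpace ℝ F]
  [NormedAddCommGroup G] [Lattice G] [HasSolidNorm G] [IsOrderedAddMonoid G] [NormedSpace ℝ G]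

/-- Norm bounded sequence in a normed space. -/
def NormBounded {X : Type*} [SeminormedAddCommGroup X] (x : ℕ → X) : Prop :=
  ∃ C : ℝ, ∀ n, ‖x n‖ ≤ C

/-- A weakly null sequence. -/
def WeaklyNull (x : ℕ → E) : Prop :=
  ∀ f : E →L[ℝ] ℝ, Tendsto (fun n => f (x n)) atTop (𝓝 0)

/-- A uaw-null sequence: `|x n| ⊓ u` is weakly null for every positive `u`. -/
def UawNull (x : ℕ → E) : Prop :=
  ∀ u : E, 0 ≤ u → WeaklyNull (fun n => |x n| ⊓ u)

/-- A pairwise disjoint sequence. -/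
def DisjointSeq (x : ℕ → E) : Prop := ∀ m n, m ≠ n → |x m| ⊓ |x n| = 0

/-- The Cesàro means of the sequence converge in norm. -/
def CesaroConvergent (y : ℕ → F) : Prop :=
  ∃ L : F, Tendsto (fun n : ℕ => (n : ℝ)⁻¹ • ∑ k ∈ Finset.range n, y k) atTop (𝓝 L)

/-- Some subsequence has norm-convergent Cesàro means. -/
def HasCesaroConvSubseq (y : ℕ → F) : Prop :=
  ∃ φ : ℕ → ℕ, StrictMono φ ∧ CesaroConvergent (y ∘ φ)

/-- Unbounded Banach-Saks operator: every norm bounded uaw-null sequence is mapped to a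
sequence having a subsequence with norm-convergent Cesàro means. -/
def UBSO (T : E →L[ℝ] F) : Prop :=
  ∀ x : ℕ → E, NormBounded x → UawNull x → HasCesaroConvSubseq (fun n => T (x n))

/-- Disjoint Banach-Saks operator. -/
def DBSO (T : E →L[ℝ] F) : Prop :=
  ∀ x : ℕ → E, NormBounded x → DisjointSeq x → HasCesaroConvSubseq (fun n => T (x n))

/-- Weak Banach-Saks operator. -/
def WBSO (T : E →L[ℝ] F) : Prop :=
  ∀ x : ℕ → E, WeaklyNull x → HasCesaroConvSubseq (fun n => T (x n))

/-- Disjoint weak Banach-Saks operator. -/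
def DWBSO (T : E →L[ℝ] F) : Prop :=
  ∀ x : ℕ → E, DisjointSeq x → WeaklyNull x → HasCesaroConvSubseq (fun n => T (x n))

/-- Banach-Saks operator. -/
def BSO (T : E →L[ℝ] F) : Prop :=
  ∀ x : ℕ → E, NormBounded x → HasCesaroConvSubseq (fun n => T (x n))

/-- Order continuous norm: every decreasing net with infimum `0` converges to `0` in norm. -/
def HasOrderContinuousNorm (E : Type*) [NormedAddCommGroup E] [Lattice E] [HasSolidNorm E] [IsOrderedAddMonoid E] : Prop :=
  ∀ (ι : Type) (_ : Preorder ι) (_ : IsDirected ι (· ≤ ·)) (_ : Nonempty ι)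
    (x : ι → E), Antitone x → IsGLB (Set.range x) 0 →
      Tendsto (fun i => ‖x i‖) atTop (𝓝 0)

/-- The canonical (pointwise-on-positive-vectors) order on the dual. -/
def DualLE (f g : E →L[ℝ] ℝ) : Prop := ∀ x : E, 0 ≤ x → f x ≤ g x

/-- The dual norm is order continuous: every net of functionals that is decreasing with
infimum `0` (with respect to the canonical order on the dual) converges to `0` in norm. -/
def DualHasOrderContinuousNorm (E : Type*) [NormedAddCommGroup E] [Lattice E] [HasSolidNorm E] [IsOrderedAddMonoid E]
    [NormedSpace ℝ E] : Prop :=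
  ∀ (ι : Type) (_ : Preorder ι) (_ : IsDirected ι (· ≤ ·)) (_ : Nonempty ι)
    (f : ι → E →L[ℝ] ℝ),
    (∀ i j, i ≤ j → DualLE (f j) (f i)) →
    (∀ i, DualLE 0 (f i)) →
    (∀ g : E →L[ℝ] ℝ, (∀ i, DualLE g (f i)) → DualLE g 0) →
    Tendsto (fun i => ‖f i‖) atTop (𝓝 0)

/-- σ-order completeness: every countable order bounded family has a supremum. -/
def SigmaOrderComplete (E : Type*) [NormedAddCommGroup E] [Lattice E] [HasSolidNorm E] [IsOrderedAddMonoid E] : Prop :=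
  ∀ x : ℕ → E, BddAbove (Set.range x) → ∃ s, IsLUB (Set.range x) s

/-- weak*-null sequence of functionals. -/
def WeakStarNull (f : ℕ → E →L[ℝ] ℝ) : Prop :=
  ∀ x : E, Tendsto (fun n => f n x) atTop (𝓝 0)

/-- Weakly null sequence in the dual space. -/
def DualWeaklyNull (f : ℕ → E →L[ℝ] ℝ) : Prop :=
  ∀ Φ : (E →L[ℝ] ℝ) →L[ℝ] ℝ, Tendsto (fun n => Φ (f n)) atTop (𝓝 0)

/-- A positive functional. -/
def PositiveFunctional (f : E →L[ℝ] ℝ) : Prop := ∀ x : E, 0 ≤ x → 0 ≤ f x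

/-- `absApply f y` is the value `|f|(y)` of the modulus of `f` at `y ≥ 0`,
via the Riesz-Kantorovich formula. -/
noncomputable def absApply (f : E →L[ℝ] ℝ) (y : E) : ℝ :=
  sSup ((fun z => f z) '' {z : E | -y ≤ z ∧ z ≤ y})

/-- `infModApply f g x` is the value `(|f| ⊓ g)(x)` at `x ≥ 0`,
via the Riesz-Kantorovich formula. -/
noncomputable def infModApply (f g : E →L[ℝ] ℝ) (x : E) : ℝ :=
  sInf {r : ℝ | ∃ y : E, 0 ≤ y ∧ y ≤ x ∧ r = absApply f y + g (x - y)}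

/-- uaw*-null sequence of functionals: `|f n| ⊓ g → 0` in the weak* topology for every
positive functional `g`. -/
def UawStarNull (f : ℕ → E →L[ℝ] ℝ) : Prop :=
  ∀ g : E →L[ℝ] ℝ, PositiveFunctional g →
    ∀ x : E, 0 ≤ x → Tendsto (fun n => infModApply (f n) g x) atTop (𝓝 0)

/-- The Grothendieck property: weak*-null sequences in the dual are weakly null. -/
def GrothendieckProp (X : Type*) [NormedAddCommGroup X] [NormedSpace ℝ X] : Prop :=
  ∀ f : ℕ → X →L[ℝ] ℝ, (∀ x : X, Tendsto (fun n => f n x) atTop (𝓝 0)) →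
    ∀ Φ : (X →L[ℝ] ℝ) →L[ℝ] ℝ, Tendsto (fun n => Φ (f n)) atTop (𝓝 0)

/-- The unbounded Grothendieck property: norm bounded uaw*-null sequences in the dual
are weakly null. -/
def UnboundedGrothendieckProp (F : Type*) [NormedAddCommGroup F] [Lattice F] [HasSolidNorm F] [IsOrderedAddMonoid F]
    [NormedSpace ℝ F] : Prop :=
  ∀ f : ℕ → F →L[ℝ] ℝ, NormBounded f → UawStarNull f → DualWeaklyNull f

/-- Grothendieck operator: the adjoint maps norm bounded weak*-null sequences to weakly
null sequences. -/
def GO (T : E →L[ℝ] F) : Prop :=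
  ∀ f : ℕ → F →L[ℝ] ℝ, NormBounded f → WeakStarNull f →
    DualWeaklyNull (fun n => (f n).comp T)

/-- Unbounded Grothendieck operator: the adjoint maps norm bounded uaw*-null sequences to
weakly null sequences. -/
def UGO (T : E →L[ℝ] F) : Prop :=
  ∀ f : ℕ → F →L[ℝ] ℝ, NormBounded f → UawStarNull f →
    DualWeaklyNull (fun n => (f n).comp T)

/-- A positive interval preserving operator: `S [0, x] = [0, S x]` for all `x ≥ 0`. -/
def IntervalPreserving (S : F →L[ℝ] G) : Prop :=
  (∀ x : F, 0 ≤ x → 0 ≤ S x) ∧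
    ∀ x : F, 0 ≤ x → S '' Set.Icc 0 x = Set.Icc 0 (S x)

end Defs

/-- The Banach lattice `ℓ¹`. -/
noncomputable abbrev ellOne : Type := MeasureTheory.Lp (α := ℕ) ℝ 1 MeasureTheory.Measure.count

/-- The Banach lattice `ℓ∞`. -/
noncomputable abbrev ellInfty : Type := MeasureTheory.Lp (α := ℕ) ℝ ⊤ MeasureTheory.Measure.count


section Aux

variable {F : Type*} [NormedAddCommGroup F] [Lattice F] [HasSolidNorm F] [IsOrderedAddMonoid F] [NormedSpace ℝ F]


lemma posfun_abs_le (g : F →L[ℝ] ℝ) (hg : ∀ x, 0 ≤ x → 0 ≤ g x) (x : F) : |g x| ≤ g |x| := by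
  have h1 : g |x| = g (x⁺) + g (x⁻) := by rw [← map_add, posPart_add_negPart]
  have h2 : g x = g (x⁺) - g (x⁻) := by rw [← map_sub, posPart_sub_negPart]
  have h3 := hg _ (posPart_nonneg x); have h4 := hg _ (negPart_nonneg x)
  rw [abs_le]; constructor <;> linarith

lemma fun_le_norm (g : F →L[ℝ] ℝ) (x : F) : g x ≤ ‖g‖ * ‖x‖ :=
  (le_abs_self _).trans (by rw [← Real.norm_eq_abs]; exact g.le_opNorm x)

lemma posfun_norm_mono (g h : F →L[ℝ] ℝ) (hg : ∀ x, 0 ≤ x → 0 ≤ g x)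
    (hgh : ∀ x, 0 ≤ x → g x ≤ h x) : ‖g‖ ≤ ‖h‖ := by
  refine g.opNorm_le_bound (norm_nonneg h) (fun x => ?_)
  calc ‖g x‖ = |g x| := Real.norm_eq_abs _
    _ ≤ g |x| := posfun_abs_le g hg x
    _ ≤ h |x| := hgh _ (abs_nonneg x)
    _ ≤ ‖h‖ * ‖|x|‖ := fun_le_norm h _
    _ = ‖h‖ * ‖x‖ := by rw [norm_abs_eq_norm]

lemma posfun_exists_near (g : F →L[ℝ] ℝ) (hg : ∀ x, 0 ≤ x → 0 ≤ g x) {η : ℝ} (hη : 0 < η) :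
    ∃ u : F, 0 ≤ u ∧ ‖u‖ ≤ 1 ∧ ‖g‖ - η ≤ g u := by
  rcases lt_or_ge (‖g‖ - η) 0 with h0 | h0
  · exact ⟨0, le_refl _, by simp, by simp [h0.le]⟩
  · have hlt : ‖g‖ - η < ‖g‖ := by linarith
    obtain ⟨x, hx1, hx2⟩ := g.exists_lt_apply_of_lt_opNorm hlt
    refine ⟨|x|, abs_nonneg x, by rw [norm_abs_eq_norm]; exact hx1.le, ?_⟩
    calc ‖g‖ - η ≤ ‖g x‖ := hx2.le
      _ = |g x| := Real.norm_eq_abs _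
      _ ≤ g |x| := posfun_abs_le g hg x

end Aux

section EllOneAux
set_option linter.unusedSectionVars false

lemma count_ae {p : ℕ → Prop} (h : ∀ᵐ n ∂(Measure.count : Measure ℕ), p n) : ∀ n, p n := by
  intro n
  by_contra hn
  have h0 : (Measure.count : Measure ℕ) {x | ¬ p x} = 0 := h
  have h1 : ({n} : Set ℕ) ⊆ {x | ¬ p x} := by simpa using hn
  have := measure_mono_null h1 h0
  simp at this

lemma summable_coe (a : ellOne) : Summable (fun n => ‖(a : ℕ → ℝ) n‖) :=
  (integrable_count_iff).mp (MeasureTheory.L1.integrable_coeFn a)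

lemma norm_eq_tsum (a : ellOne) : ‖a‖ = ∑' n, ‖(a : ℕ → ℝ) n‖ := by
  have hs : Summable (fun n => ‖(a : ℕ → ℝ) n‖₊) := by
    simpa [← NNReal.summable_coe, coe_nnnorm] using summable_coe a
  rw [MeasureTheory.Lp.norm_def, eLpNorm_one_eq_lintegral_enorm, lintegral_count]
  simp only [enorm_eq_nnnorm]
  rw [← ENNReal.coe_tsum hs]
  simp [NNReal.coe_tsum, coe_nnnorm]

variable {F : Type*} [NormedAddCommGroup F] [Lattice F] [HasSolidNorm F] [IsOrderedAddMonoid F] [NormedSpace ℝ F] [CompleteSpace F]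

lemma summable_norm_smul (a : ellOne) (u : ℕ → F) (hu : ∀ n, ‖u n‖ ≤ 1) :
    Summable (fun n => ‖(a : ℕ → ℝ) n • u n‖) := by
  refine Summable.of_nonneg_of_le (fun n => norm_nonneg _) (fun n => ?_) (summable_coe a)
  rw [norm_smul]
  nlinarith [norm_nonneg ((a:ℕ→ℝ) n), hu n, norm_nonneg (u n)]

lemma summable_smul (a : ellOne) (u : ℕ → F) (hu : ∀ n, ‖u n‖ ≤ 1) :
    Summable (fun n => (a : ℕ → ℝ) n • u n) :=
  Summable.of_norm (summable_norm_smul a u hu)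

noncomputable def Tmap (u : ℕ → F) (hu : ∀ n, ‖u n‖ ≤ 1) : ellOne →L[ℝ] F :=
  LinearMap.mkContinuous
    { toFun := fun a => ∑' n, (a : ℕ → ℝ) n • u n
      map_add' := by
        intro a b
        have hab : ∀ n, ((a + b : ellOne) : ℕ → ℝ) n = (a : ℕ → ℝ) n + (b : ℕ → ℝ) n :=
          count_ae (MeasureTheory.Lp.coeFn_add a b)
        simp only [hab, add_smul]
        exact Summable.tsum_add (summable_smul a u hu) (summable_smul b u hu)
      map_smul' := by
        intro c a
        have hca : ∀ n, ((c • a : ellOne) : ℕ → ℝ) n = c • (a : ℕ → ℝ) n :=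
          count_ae (MeasureTheory.Lp.coeFn_smul c a)
        simp only [hca, RingHom.id_apply, smul_assoc]
        exact Summable.tsum_const_smul c (summable_smul a u hu) }
    1 (by
      intro a
      simp only [LinearMap.coe_mk, AddHom.coe_mk, one_mul]
      calc ‖∑' n, (a : ℕ → ℝ) n • u n‖ ≤ ∑' n, ‖(a : ℕ → ℝ) n • u n‖ :=
            norm_tsum_le_tsum_norm (summable_norm_smul a u hu)
        _ ≤ ∑' n, ‖(a : ℕ → ℝ) n‖ := by
            refine Summable.tsum_le_tsum (fun n => ?_) (summable_norm_smul a u hu) (summable_coe a)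
            rw [norm_smul]
            nlinarith [norm_nonneg ((a:ℕ→ℝ) n), hu n, norm_nonneg (u n)]
        _ = ‖a‖ := (norm_eq_tsum a).symm)

noncomputable def e1 (n : ℕ) : ellOne :=
  indicatorConstLp 1 (measurableSet_singleton n) (by simp) (1:ℝ)

lemma e1_coe (n : ℕ) : ∀ k, ((e1 n : ellOne) : ℕ → ℝ) k = if k = n then 1 else 0 := by
  have := count_ae (indicatorConstLp_coeFn (p := 1)
    (μ := (Measure.count : Measure ℕ)) (hs := measurableSet_singleton n) (hμs := by simp) (c := (1:ℝ)))
  intro k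
  rw [e1, this k]
  simp [Set.indicator_apply]

lemma Tmap_e1 (u : ℕ → F) (hu : ∀ n, ‖u n‖ ≤ 1) (m : ℕ) : Tmap u hu (e1 m) = u m := by
  show (∑' n, ((e1 m : ellOne) : ℕ → ℝ) n • u n) = u m
  rw [tsum_eq_single m]
  · rw [e1_coe m m]; simp
  · intro b hb; rw [e1_coe m b]; simp [hb]

lemma norm_e1 (n : ℕ) : ‖e1 n‖ = 1 := by
  rw [e1, norm_indicatorConstLp (by norm_num) (by norm_num)]
  simp


lemma e1_nonneg (n : ℕ) : (0:ellOne) ≤ e1 n := by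
  rw [← MeasureTheory.Lp.coeFn_nonneg]
  refine Filter.Eventually.of_forall (fun k => ?_)
  rw [Pi.zero_apply, e1_coe n k]
  positivity

lemma uaw_e1 (u : ellOne) (hu : 0 ≤ u) :
    Tendsto (fun n => ‖|e1 n| ⊓ u‖) atTop (𝓝 0) := by
  have huc : ∀ k, (0:ℕ→ℝ) k ≤ (u : ℕ → ℝ) k :=
    count_ae ((MeasureTheory.Lp.coeFn_nonneg u).mpr hu)
  simp only [Pi.zero_apply] at huc
  have key : ∀ n, ‖|e1 n| ⊓ u‖ ≤ ‖(u : ℕ → ℝ) n‖ := by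
    intro n
    have habs : ∀ k, ((|e1 n| : ellOne) : ℕ → ℝ) k = |((e1 n : ellOne) : ℕ → ℝ) k| :=
      count_ae (MeasureTheory.Lp.coeFn_abs (e1 n))
    have hinf : ∀ k, ((|e1 n| ⊓ u : ellOne) : ℕ → ℝ) k
        = (((|e1 n| : ellOne) : ℕ → ℝ) ⊓ ((u : ellOne) : ℕ → ℝ)) k :=
      count_ae (MeasureTheory.Lp.coeFn_inf _ _)
    have h1 : (0:ellOne) ≤ |e1 n| ⊓ u := by
      rw [← MeasureTheory.Lp.coeFn_nonneg]
      refine Filter.Eventually.of_forall (fun k => ?_)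
      rw [Pi.zero_apply, hinf k, Pi.inf_apply, habs k, le_inf_iff]
      exact ⟨abs_nonneg _, huc k⟩
    have h2 : |e1 n| ⊓ u ≤ (u : ℕ → ℝ) n • e1 n := by
      rw [← MeasureTheory.Lp.coeFn_le]
      have hsmul : ∀ k, (((u : ℕ → ℝ) n • e1 n : ellOne) : ℕ → ℝ) k
          = (u : ℕ → ℝ) n • ((e1 n : ellOne) : ℕ → ℝ) k :=
        count_ae (MeasureTheory.Lp.coeFn_smul _ _)
      refine Filter.Eventually.of_forall (fun k => ?_)
      rw [hinf k, Pi.inf_apply, habs k, hsmul k, e1_coe n k, smul_eq_mul]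
      by_cases hk : k = n
      · subst hk
        simpa using inf_le_right (a := |(1:ℝ)|) (b := (u : ℕ → ℝ) k)
      · simp only [if_neg hk, abs_zero, mul_zero]
        exact inf_le_left
    have h3 : (0:ellOne) ≤ (u : ℕ → ℝ) n • e1 n := by
      rw [← MeasureTheory.Lp.coeFn_nonneg]
      have hsmul : ∀ k, (((u : ℕ → ℝ) n • e1 n : ellOne) : ℕ → ℝ) k
          = (u : ℕ → ℝ) n • ((e1 n : ellOne) : ℕ → ℝ) k :=
        count_ae (MeasureTheory.Lp.coeFn_smul _ _)
      refine Filter.Eventually.of_forall (fun k => ?_)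
      rw [Pi.zero_apply, hsmul k, e1_coe n k, smul_eq_mul]
      by_cases hk : k = n <;> simp [hk, huc n]
    calc ‖|e1 n| ⊓ u‖ ≤ ‖(u : ℕ → ℝ) n • e1 n‖ := by
          apply norm_le_norm_of_abs_le_abs
          rw [abs_of_nonneg h1, abs_of_nonneg h3]
          exact h2
      _ = ‖(u : ℕ → ℝ) n‖ := by rw [norm_smul, norm_e1, mul_one]
  have hu0 : Tendsto (fun n => ‖(u : ℕ → ℝ) n‖) atTop (𝓝 0) :=
    (summable_coe u).tendsto_atTop_zero
  exact squeeze_zero (fun n => norm_nonneg _) key hu0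

end EllOneAux

theorem dual_orderContinuous_of_forall_ubso {F : Type*} [NormedAddCommGroup F] [Lattice F] [HasSolidNorm F] [IsOrderedAddMonoid F] [NormedSpace ℝ F] [CompleteSpace F]
    (h : ∀ T : ellOne →L[ℝ] F, UBSO T) : DualHasOrderContinuousNorm F := by
  intro ι ipre idir ine f hmono hpos hinf
  by_contra hnot
  -- Step 1: extract ε with ‖f i‖ ≥ ε frequently, hence everywhere
  rw [Metric.tendsto_nhds] at hnot
  push_neg at hnot
  obtain ⟨ε, hε, hfreq⟩ := hnot
  have hfreq' : ∀ i₀ : ι, ∃ i, i₀ ≤ i ∧ ε ≤ ‖f i‖ := by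
    intro i₀
    obtain ⟨i, hi, hd⟩ := Filter.frequently_atTop.mp hfreq i₀
    refine ⟨i, hi, ?_⟩
    rw [Real.dist_eq, sub_zero, abs_of_nonneg (norm_nonneg _)] at hd
    exact hd
  have hnormmono : ∀ i j : ι, i ≤ j → ‖f j‖ ≤ ‖f i‖ := fun i j hij =>
    posfun_norm_mono _ _ (fun x hx => hpos j x hx) (fun x hx => hmono i j hij x hx)
  have hεall : ∀ i, ε ≤ ‖f i‖ := by
    intro i
    obtain ⟨j, hij, hj⟩ := hfreq' i
    exact hj.trans (hnormmono i j hij)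
  -- Step 2: L = inf of norms
  have hbddn : BddBelow (Set.range fun i => ‖f i‖) := ⟨ε, by rintro r ⟨i, rfl⟩; exact hεall i⟩
  set L : ℝ := ⨅ i, ‖f i‖ with hLdef
  have hLε : ε ≤ L := le_ciInf hεall
  have hLle : ∀ i, L ≤ ‖f i‖ := fun i => ciInf_le hbddn i
  set η : ℝ := ε / 8 with hηdef
  have hη : 0 < η := by positivity
  -- Step 3: pointwise convergence of the net to 0 on positive vectors
  haveI : Nonempty ι := ine
  haveI : (atTop : Filter ι).NeBot := atTop_neBot
  have hbdd : ∀ x : F, 0 ≤ x → BddBelow (Set.range fun i => f i x) := by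
    intro x hx
    exact ⟨0, by rintro r ⟨i, rfl⟩; exact hpos i x hx⟩
  have hanti : ∀ x : F, 0 ≤ x → Antitone fun i => f i x := fun x hx i j hij =>
    hmono i j hij x hx
  have htend : ∀ x : F, 0 ≤ x → Tendsto (fun i => f i x) atTop (𝓝 (⨅ i, f i x)) :=
    fun x hx => tendsto_atTop_ciInf (hanti x hx) (hbdd x hx)
  set glim : F → ℝ := fun x => (⨅ i, f i (x⁺)) - ⨅ i, f i (x⁻) with hglimdef
  have htg : ∀ x : F, Tendsto (fun i => f i x) atTop (𝓝 (glim x)) := by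
    intro x
    have h1 := (htend (x⁺) (posPart_nonneg x)).sub (htend (x⁻) (negPart_nonneg x))
    have heq : (fun i => f i (x⁺) - f i (x⁻)) = fun i => f i x := by
      funext i; rw [← map_sub, posPart_sub_negPart]
    rwa [heq] at h1
  obtain ⟨i₀⟩ := ine
  have hgbd : ∀ x : F, ‖glim x‖ ≤ ‖f i₀‖ * ‖x‖ := by
    intro x
    rw [Real.norm_eq_abs]
    have habs : Tendsto (fun i => |f i x|) atTop (𝓝 |glim x|) := (htg x).abs
    refine le_of_tendsto habs (Filter.eventually_atTop.mpr ⟨i₀, fun i hi => ?_⟩)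
    calc |f i x| ≤ f i |x| := posfun_abs_le _ (fun y hy => hpos i y hy) x
      _ ≤ f i₀ |x| := hmono i₀ i hi _ (abs_nonneg x)
      _ ≤ ‖f i₀‖ * ‖|x|‖ := fun_le_norm _ _
      _ = ‖f i₀‖ * ‖x‖ := by rw [norm_abs_eq_norm]
  set G : F →L[ℝ] ℝ := LinearMap.mkContinuous
    { toFun := glim
      map_add' := fun x y => by
        refine tendsto_nhds_unique (htg (x + y)) ?_
        have h1 := (htg x).add (htg y)
        have heq : (fun i => f i x + f i y) = fun i => f i (x + y) := by
          funext i; rw [← map_add]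
        rwa [heq] at h1
      map_smul' := fun c x => by
        simp only [RingHom.id_apply]
        refine tendsto_nhds_unique (htg (c • x)) ?_
        have h1 := (htg x).const_mul c
        have heq : (fun i => c * f i x) = fun i => f i (c • x) := by
          funext i; rw [ContinuousLinearMap.map_smul, smul_eq_mul]
        rwa [heq] at h1 }
    (‖f i₀‖) hgbd with hGdef
  have hGapp : ∀ x, G x = glim x := fun x => rfl
  have hglim_eq : ∀ x : F, 0 ≤ x → glim x = ⨅ i, f i x := by
    intro x hx
    have h1 : x⁺ = x := posPart_of_nonneg hx
    have h2 : x⁻ = 0 := negPart_of_nonneg hx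
    have h3 : (⨅ i, f i (0:F)) = 0 := by simp [map_zero]
    rw [hglimdef]; simp only []
    rw [h1, h2, h3, sub_zero]
  have hGle : ∀ i, DualLE G (f i) := by
    intro i x hx
    rw [hGapp, hglim_eq x hx]
    exact ciInf_le (hbdd x hx) i
  have hG0 : DualLE G 0 := hinf G hGle
  have hinf0 : ∀ x : F, 0 ≤ x → (⨅ i, f i x) = 0 := by
    intro x hx
    have h1 : (⨅ i, f i x) ≤ 0 := by
      have := hG0 x hx
      rw [hGapp, hglim_eq x hx] at this
      simpa using this
    exact le_antisymm h1 (le_ciInf fun i => hpos i x hx)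
  have hsmall : ∀ x : F, 0 ≤ x → ∀ i₁ : ι, ∃ i, i₁ ≤ i ∧ f i x < η := by
    intro x hx i₁
    have h0 : (⨅ i, f i x) < η := by rw [hinf0 x hx]; exact hη
    obtain ⟨i₂, hi₂⟩ := exists_lt_of_ciInf_lt h0
    obtain ⟨i₃, h13, h23⟩ := exists_ge_ge i₁ i₂
    exact ⟨i₃, h13, lt_of_le_of_lt (hmono i₂ i₃ h23 x hx) hi₂⟩
  -- Step 4: choose istar with norm close to L
  obtain ⟨istar, histar⟩ : ∃ i, ‖f i‖ < L + η := by
    have h0 : (⨅ i, ‖f i‖) < L + η := by rw [← hLdef]; linarith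
    exact exists_lt_of_ciInf_lt h0
  -- Step 5: recursive construction
  have hpick : ∀ i : ι, ∃ u : F, 0 ≤ u ∧ ‖u‖ ≤ 1 ∧ ‖f i‖ - η ≤ f i u :=
    fun i => posfun_exists_near (f i) (fun x hx => hpos i x hx) hη
  choose pu hpu0 hpu1 hpu2 using hpick
  have hstep : ∀ i : ι, ∃ j, i ≤ j ∧ f j (pu i) < η := fun i => hsmall (pu i) (hpu0 i) i
  choose nxt hnxt1 hnxt2 using hstep
  set idx : ℕ → ι := fun k => Nat.rec istar (fun _ j => nxt j) k with hidxdef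
  have hidxs : ∀ k, idx (k + 1) = nxt (idx k) := fun k => rfl
  have hidx0 : idx 0 = istar := rfl
  have hidxmono : Monotone idx :=
    monotone_nat_of_le_succ (fun k => by rw [hidxs]; exact hnxt1 (idx k))
  set u : ℕ → F := fun k => pu (idx k) with hudef
  set dc : ℕ → F →L[ℝ] ℝ := fun k => f (idx k) - f (idx (k + 1)) with hdcdef
  have hdc : ∀ k x, dc k x = f (idx k) x - f (idx (k + 1)) x := fun k x => rfl
  have hd0 : ∀ (k : ℕ) (x : F), 0 ≤ x → 0 ≤ dc k x := by
    intro k x hx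
    rw [hdc, sub_nonneg]
    exact hmono (idx k) (idx (k + 1)) (hidxmono (Nat.le_succ k)) x hx
  have hddiag : ∀ k, L - 2 * η ≤ dc k (u k) := by
    intro k
    have h1 : L - η ≤ f (idx k) (u k) := by
      have := hpu2 (idx k)
      have h2 := hLle (idx k)
      calc L - η ≤ ‖f (idx k)‖ - η := by linarith
        _ ≤ f (idx k) (u k) := this
    have h2 : f (idx (k + 1)) (u k) < η := by rw [hidxs]; exact hnxt2 (idx k)
    rw [hdc]; linarith
  have htel : ∀ (N : ℕ) (x : F), ∑ k ∈ Finset.range N, dc k x = f istar x - f (idx N) x := by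
    intro N x
    have := Finset.sum_range_sub' (fun k => f (idx k) x) N
    simpa [hdc, hidx0] using this
  have hsumle : ∀ (N : ℕ) (x : F), 0 ≤ x →
      ∑ k ∈ Finset.range N, dc k x ≤ ‖f istar‖ * ‖x‖ := by
    intro N x hx
    rw [htel]
    have h1 : (0:ℝ) ≤ f (idx N) x := by simpa using hpos (idx N) x hx
    have h2 : f istar x ≤ ‖f istar‖ * ‖x‖ := fun_le_norm _ _
    linarith
  have hcross : ∀ (N j : ℕ), j < N →
      ∑ k ∈ (Finset.range N).erase j, dc k (u j) ≤ 3 * η := by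
    intro N j hj
    have h1 : ∑ k ∈ (Finset.range N).erase j, dc k (u j) + dc j (u j)
        = ∑ k ∈ Finset.range N, dc k (u j) :=
      Finset.sum_erase_add _ _ (Finset.mem_range.mpr hj)
    have h2 := hsumle N (u j) (hpu0 (idx j))
    have h3 : ‖f istar‖ * ‖u j‖ ≤ (L + η) * 1 := by
      apply mul_le_mul histar.le (hpu1 (idx j)) (norm_nonneg _)
      linarith [hεall istar, hε]
    have h4 := hddiag j
    rw [mul_one] at h3
    linarith
  -- Step 6: the operator and the subsequence
  have hunorm : ∀ k, ‖u k‖ ≤ 1 := fun k => hpu1 (idx k)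
  set T : ellOne →L[ℝ] F := Tmap u hunorm with hTdef
  have he1bdd : NormBounded e1 := ⟨1, fun n => le_of_eq (norm_e1 n)⟩
  have he1uaw : UawNull e1 := by
    intro w hw g
    have h0 := uaw_e1 w hw
    have hb : ∀ n : ℕ, ‖g (|e1 n| ⊓ w)‖ ≤ ‖g‖ * ‖|e1 n| ⊓ w‖ := fun n => g.le_opNorm _
    have hlim : Tendsto (fun n : ℕ => ‖g‖ * ‖|e1 n| ⊓ w‖) atTop (𝓝 0) := by
      simpa using h0.const_mul ‖g‖
    exact squeeze_zero_norm hb hlim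
  obtain ⟨φ, hφ, Lim, hconv⟩ := h T e1 he1bdd he1uaw
  set v : ℕ → F := fun k => u (φ k) with hvdef
  have hconv' : Tendsto (fun n : ℕ => (n : ℝ)⁻¹ • ∑ k ∈ Finset.range n, v k) atTop (𝓝 Lim) := by
    have heq : (fun n : ℕ => (n : ℝ)⁻¹ • ∑ k ∈ Finset.range n, ((fun m => T (e1 m)) ∘ φ) k)
        = fun n : ℕ => (n : ℝ)⁻¹ • ∑ k ∈ Finset.range n, v k := by
      funext n
      congr 1
      refine Finset.sum_congr rfl (fun k _ => ?_)
      show T (e1 (φ k)) = v k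
      rw [hTdef, Tmap_e1]
    rwa [heq] at hconv
  set C : ℕ → F := fun n => (n : ℝ)⁻¹ • ∑ k ∈ Finset.range n, v k with hCdef
  have hdiffconv : Tendsto (fun n => ‖C n - C (2 * n)‖) atTop (𝓝 0) := by
    have h2n : Tendsto (fun n : ℕ => 2 * n) atTop atTop :=
      tendsto_atTop_mono (fun n => by simp only [id_eq]; omega) tendsto_id
    have h2 : Tendsto (fun n => C (2 * n)) atTop (𝓝 Lim) := hconv'.comp h2n
    have h3 : Tendsto (fun n => C n - C (2 * n)) atTop (𝓝 0) := by
      simpa using hconv'.sub h2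
    simpa using h3.norm
  -- Step 7: lower bound for the Cesaro differences
  have hkey : ∀ n : ℕ, 1 ≤ n → L - 5 * η ≤ (L + η) * ‖C n - C (2 * n)‖ := by
    intro n hn
    have hnR : (0:ℝ) < (n:ℝ) := by exact_mod_cast hn
    set N : ℕ := 2 * n with hNdef
    have hNpos : 0 < N := by omega
    have hNR : (0:ℝ) < (N:ℝ) := by exact_mod_cast hNpos
    set σ : ℕ → ℝ := fun k => if k < n then 1 else -1 with hσdef
    have hσabs : ∀ k, |σ k| = 1 := by
      intro k; by_cases hk : k < n <;> simp [hσdef, hk]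
    set M : ℕ := φ (N - 1) + 1 with hMdef
    have hφM : ∀ k, k < N → φ k < M := by
      intro k hk
      have h1 : φ k ≤ φ (N - 1) := hφ.monotone (by omega)
      omega
    set Ψ : F →L[ℝ] ℝ := ∑ k ∈ Finset.range N, σ k • dc (φ k) with hΨdef
    have hΨapp : ∀ x : F, Ψ x = ∑ k ∈ Finset.range N, σ k * dc (φ k) x := by
      intro x
      rw [hΨdef]
      simp [ContinuousLinearMap.sum_apply, ContinuousLinearMap.coe_smul', smul_eq_mul]
    have hsub : ∀ (y : F), 0 ≤ y → ∀ s t : Finset ℕ, s.image φ ⊆ t →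
        ∑ k ∈ s, dc (φ k) y ≤ ∑ m ∈ t, dc m y := by
      intro y hy s t hst
      rw [show ∑ k ∈ s, dc (φ k) y = ∑ m ∈ s.image φ, dc m y from
        (Finset.sum_image (g := φ) (f := fun m => dc m y)
          (fun a _ b _ hab => hφ.injective hab)).symm]
      exact Finset.sum_le_sum_of_subset_of_nonneg hst (fun m _ _ => hd0 m y hy)
    have hΨbd : ∀ x : F, Ψ x ≤ (L + η) * ‖x‖ := by
      intro x
      rw [hΨapp]
      have h1 : ∀ k ∈ Finset.range N, σ k * dc (φ k) x ≤ dc (φ k) |x| := by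
        intro k _
        calc σ k * dc (φ k) x ≤ |σ k * dc (φ k) x| := le_abs_self _
          _ = |dc (φ k) x| := by rw [abs_mul, hσabs k, one_mul]
          _ ≤ dc (φ k) |x| := posfun_abs_le _ (fun y hy => hd0 _ y hy) x
      calc ∑ k ∈ Finset.range N, σ k * dc (φ k) x
          ≤ ∑ k ∈ Finset.range N, dc (φ k) |x| := Finset.sum_le_sum h1
        _ ≤ ∑ m ∈ Finset.range M, dc m |x| := by
            refine hsub |x| (abs_nonneg x) _ _ ?_
            intro m hm
            obtain ⟨k, hk, rfl⟩ := Finset.mem_image.mp hm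
            exact Finset.mem_range.mpr (hφM k (Finset.mem_range.mp hk))
        _ ≤ ‖f istar‖ * ‖|x|‖ := hsumle M |x| (abs_nonneg x)
        _ ≤ (L + η) * ‖x‖ := by
            rw [norm_abs_eq_norm]
            exact mul_le_mul_of_nonneg_right histar.le (norm_nonneg x)
    have hterm : ∀ j ∈ Finset.range N, L - 5 * η ≤ σ j * Ψ (v j) := by
      intro j hj
      have hjN := Finset.mem_range.mp hj
      rw [hΨapp]
      have hsplit : ∑ k ∈ Finset.range N, σ k * dc (φ k) (v j)
          = (∑ k ∈ (Finset.range N).erase j, σ k * dc (φ k) (v j)) + σ j * dc (φ j) (v j) :=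
        (Finset.sum_erase_add _ _ hj).symm
      rw [hsplit, mul_add]
      have hvj0 : (0:F) ≤ v j := hpu0 (idx (φ j))
      have hσj : σ j * (σ j * dc (φ j) (v j)) = dc (φ j) (v j) := by
        by_cases hjn : j < n <;> simp [hσdef, hjn]
      have hcrossj : |∑ k ∈ (Finset.range N).erase j, σ k * dc (φ k) (v j)| ≤ 3 * η := by
        have h1 : ∀ k ∈ (Finset.range N).erase j, |σ k * dc (φ k) (v j)| = dc (φ k) (v j) := by
          intro k _
          rw [abs_mul, hσabs k, one_mul, abs_of_nonneg (hd0 _ _ hvj0)]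
        calc |∑ k ∈ (Finset.range N).erase j, σ k * dc (φ k) (v j)|
            ≤ ∑ k ∈ (Finset.range N).erase j, |σ k * dc (φ k) (v j)| :=
              Finset.abs_sum_le_sum_abs _ _
          _ = ∑ k ∈ (Finset.range N).erase j, dc (φ k) (v j) := Finset.sum_congr rfl h1
          _ ≤ ∑ m ∈ (Finset.range M).erase (φ j), dc m (v j) := by
              refine hsub (v j) hvj0 _ _ ?_
              intro m hm
              obtain ⟨k, hk, rfl⟩ := Finset.mem_image.mp hm
              obtain ⟨hkj, hkN⟩ := Finset.mem_erase.mp hk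
              exact Finset.mem_erase.mpr ⟨fun hc => hkj (hφ.injective hc),
                Finset.mem_range.mpr (hφM k (Finset.mem_range.mp hkN))⟩
          _ ≤ 3 * η := hcross M (φ j) (hφM j hjN)
      have hdiag : L - 2 * η ≤ dc (φ j) (v j) := hddiag (φ j)
      have h3 : -(3 * η) ≤ σ j * ∑ k ∈ (Finset.range N).erase j, σ k * dc (φ k) (v j) := by
        have h4 : |σ j * ∑ k ∈ (Finset.range N).erase j, σ k * dc (φ k) (v j)| ≤ 3 * η := by
          rw [abs_mul, hσabs j, one_mul]
          exact hcrossj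
        linarith [(abs_le.mp h4).1]
      rw [hσj]
      linarith
    set D : F := ∑ j ∈ Finset.range N, σ j • v j with hDdef
    have hΨDlow : (N:ℝ) * (L - 5 * η) ≤ Ψ D := by
      have h1 : Ψ D = ∑ j ∈ Finset.range N, σ j * Ψ (v j) := by
        rw [hDdef, map_sum]
        exact Finset.sum_congr rfl (fun j _ => by rw [ContinuousLinearMap.map_smul, smul_eq_mul])
      rw [h1]
      calc (N:ℝ) * (L - 5 * η) = ∑ _j ∈ Finset.range N, (L - 5 * η) := by
            rw [Finset.sum_const, Finset.card_range, nsmul_eq_mul]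
        _ ≤ ∑ j ∈ Finset.range N, σ j * Ψ (v j) := Finset.sum_le_sum hterm
    -- claim A : C n - C N = N⁻¹ • D
    have hCn : C n = ((n:ℝ))⁻¹ • ∑ k ∈ Finset.range n, v k := rfl
    have hCN : C N = ((N:ℝ))⁻¹ • ∑ k ∈ Finset.range N, v k := rfl
    have hsplitsum : ∑ k ∈ Finset.range N, v k
        = ∑ k ∈ Finset.range n, v k + ∑ k ∈ Finset.range n, v (n + k) := by
      rw [show N = n + n from by omega]
      exact Finset.sum_range_add v n n
    have hD : D = ∑ k ∈ Finset.range n, v k - ∑ k ∈ Finset.range n, v (n + k) := by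
      rw [hDdef, show N = n + n from by omega, Finset.sum_range_add (fun j => σ j • v j) n n]
      have e1' : ∀ k ∈ Finset.range n, σ k • v k = v k := by
        intro k hk
        have := Finset.mem_range.mp hk
        simp [hσdef, this]
      have e2' : ∀ k ∈ Finset.range n, σ (n + k) • v (n + k) = -(v (n + k)) := by
        intro k hk
        have hnk : ¬ (n + k < n) := by omega
        simp [hσdef, hnk]
      rw [Finset.sum_congr rfl e1', Finset.sum_congr rfl e2', Finset.sum_neg_distrib,
        ← sub_eq_add_neg]
    have hhalf : (n:ℝ)⁻¹ = (N:ℝ)⁻¹ + (N:ℝ)⁻¹ := by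
      have hN2 : ((N:ℕ):ℝ) = 2 * (n:ℝ) := by rw [hNdef]; push_cast; ring
      rw [hN2]
      field_simp
      ring
    have hCA : C n - C N = ((N:ℝ))⁻¹ • D := by
      calc C n - C N
          = ((N:ℝ)⁻¹ + (N:ℝ)⁻¹) • (∑ k ∈ Finset.range n, v k)
            - (N:ℝ)⁻¹ • ((∑ k ∈ Finset.range n, v k) + ∑ k ∈ Finset.range n, v (n + k)) := by
            rw [hCn, hCN, hhalf, hsplitsum]
        _ = (N:ℝ)⁻¹ • ((∑ k ∈ Finset.range n, v k) - ∑ k ∈ Finset.range n, v (n + k)) := by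
            rw [add_smul, smul_add, smul_sub]; abel
        _ = ((N:ℝ))⁻¹ • D := by rw [hD]
    have h6 : (N:ℝ) * (L - 5 * η) ≤ (L + η) * ‖D‖ := le_trans hΨDlow (hΨbd D)
    have h7 : ‖C n - C N‖ = (N:ℝ)⁻¹ * ‖D‖ := by
      rw [hCA, norm_smul, Real.norm_eq_abs, abs_of_nonneg (by positivity)]
    rw [h7]
    have h8 : (N:ℝ)⁻¹ * ((N:ℝ) * (L - 5 * η)) ≤ (N:ℝ)⁻¹ * ((L + η) * ‖D‖) :=
      mul_le_mul_of_nonneg_left h6 (by positivity)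
    have h9 : (N:ℝ)⁻¹ * ((N:ℝ) * (L - 5 * η)) = L - 5 * η := by
      field_simp
    calc L - 5 * η = (N:ℝ)⁻¹ * ((N:ℝ) * (L - 5 * η)) := h9.symm
      _ ≤ (N:ℝ)⁻¹ * ((L + η) * ‖D‖) := h8
      _ = (L + η) * ((N:ℝ)⁻¹ * ‖D‖) := by ring
  -- Step 8: conclusion
  have h5 : 0 < L - 5 * η := by
    have : (8:ℝ) * η = ε := by rw [hηdef]; ring
    linarith
  have hLpos : 0 < L + η := by linarith
  obtain ⟨N₀, hN₀⟩ := (Metric.tendsto_atTop.mp hdiffconv) ((L - 5 * η) / (L + η))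
    (div_pos h5 hLpos)
  have hcontr := hkey (max N₀ 1) (le_max_right _ _)
  have hd := hN₀ (max N₀ 1) (le_max_left _ _)
  rw [Real.dist_eq, sub_zero, abs_of_nonneg (norm_nonneg _)] at hd
  have : (L + η) * ‖C (max N₀ 1) - C (2 * max N₀ 1)‖ < L - 5 * η := by
    rw [lt_div_iff₀ hLpos] at hd
    linarith [hd]
  linarith
end

section
/- Let E, F, G be Banach lattices, T : F → G a weak Banach-Saks operator, and S : E → F an unbounded continuous operator (mapping norm bounded uaw-null sequences to weakly null sequences). Then T∘S is an unbounded Banach-Saks operator. -/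
open Filter Topology MeasureTheory

theorem wbso_comp_unboundedContinuous {E F G : Type*} [NormedAddCommGroup E] [Lattice E] [HasSolidNorm E] [IsOrderedAddMonoid E] [NormedSpace ℝ E] [CompleteSpace E]
    [NormedAddCommGroup F] [Lattice F] [HasSolidNorm F] [IsOrderedAddMonoid F] [NormedSpace ℝ F] [CompleteSpace F]
    [NormedAddCommGroup G] [Lattice G] [HasSolidNorm G] [IsOrderedAddMonoid G] [NormedSpace ℝ G] [CompleteSpace G]
    (T : F →L[ℝ] G) (hT : WBSO T) (S : E →L[ℝ] F)
    (hS : ∀ x : ℕ → E, NormBounded x → UawNull x → WeaklyNull (fun n => S (x n))) :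
    UBSO (T.comp S) := by
  intro x hb hu
  simpa using hT (fun n => S (x n)) (hS x hb hu)
end

section
/- Let E, F, G be Banach lattices. (i) If T : F → G is an unbounded Grothendieck operator and S : E → F is continuous, then T∘S is an unbounded Grothendieck operator. (ii) If T : E → F is an unbounded Grothendieck operator and S : F → G is interval-preserving, then S∘T is an unbounded Grothendieck operator. -/
open Filter Topology MeasureTheory

section Aux

variable {E F G : Type*} [NormedAddCommGroup E] [Lattice E] [HasSolidNorm E] [IsOrderedAddMonoid E] [NormedSpace ℝ E]
  [NormedAddCommGroup F] [Lattice F] [HasSolidNorm F] [IsOrderedAddMonoid F] [NormedSpace ℝ F]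
  [NormedAddCommGroup G] [Lattice G] [HasSolidNorm G] [IsOrderedAddMonoid G] [NormedSpace ℝ G]

/-- Riesz decomposition for positive elements. -/
lemma aux_riesz_pos {w z₁ z₂ : E} (hw : 0 ≤ w) (h1 : 0 ≤ z₁) (h2 : 0 ≤ z₂)
    (hle : w ≤ z₁ + z₂) :
    ∃ w₁ w₂, 0 ≤ w₁ ∧ w₁ ≤ z₁ ∧ 0 ≤ w₂ ∧ w₂ ≤ z₂ ∧ w = w₁ + w₂ := by
  refine ⟨w ⊓ z₁, w - w ⊓ z₁, le_inf hw h1, inf_le_right, ?_, ?_, by abel⟩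
  · exact sub_nonneg.mpr inf_le_left
  · rw [sub_le_comm]
    exact le_inf (sub_le_self w h2) (sub_le_iff_le_add.mpr hle)

/-- Riesz decomposition. -/
lemma aux_riesz {a b c : E} (hb : 0 ≤ b) (hc : 0 ≤ c) (h1 : -(b + c) ≤ a) (h2 : a ≤ b + c) :
    ∃ a₁ a₂, a = a₁ + a₂ ∧ -b ≤ a₁ ∧ a₁ ≤ b ∧ -c ≤ a₂ ∧ a₂ ≤ c := by
  refine ⟨(a ⊔ -b) ⊓ b, a - (a ⊔ -b) ⊓ b, by abel, le_inf le_sup_right (neg_le_self hb),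
    inf_le_right, ?_, ?_⟩
  · have hb' : -b ≤ a + c := by
      calc -b = -(b + c) + c := by abel
        _ ≤ a + c := add_le_add_left h1 _
    have : (a ⊔ -b) ⊓ b ≤ a + c :=
      inf_le_left.trans (sup_le (le_add_of_nonneg_right hc) hb')
    calc -c = a - (a + c) := by abel
      _ ≤ a - (a ⊔ -b) ⊓ b := by exact sub_le_sub_left this a
  · rw [sub_le_comm]
    exact le_inf ((sub_le_self a hc).trans le_sup_left) (sub_le_iff_le_add.mpr h2)

lemma absApply_set_nonempty (f : E →L[ℝ] ℝ) {y : E} (hy : 0 ≤ y) :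
    ((fun z => f z) '' {z : E | -y ≤ z ∧ z ≤ y}).Nonempty :=
  ⟨f 0, 0, ⟨neg_nonpos.mpr hy, hy⟩, rfl⟩

lemma absApply_set_bound (f : E →L[ℝ] ℝ) {y : E} (hy : 0 ≤ y) :
    ∀ r ∈ (fun z => f z) '' {z : E | -y ≤ z ∧ z ≤ y}, r ≤ ‖f‖ * ‖y‖ := by
  rintro r ⟨z, ⟨hz1, hz2⟩, rfl⟩
  have habs : |z| ≤ |y| := by
    rw [abs_of_nonneg hy]
    exact abs_le'.mpr ⟨hz2, neg_le.mpr hz1⟩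
  calc f z ≤ |f z| := le_abs_self _
    _ = ‖f z‖ := (Real.norm_eq_abs _).symm
    _ ≤ ‖f‖ * ‖z‖ := f.le_opNorm z
    _ ≤ ‖f‖ * ‖y‖ := by
        have := norm_le_norm_of_abs_le_abs habs
        exact mul_le_mul_of_nonneg_left this (norm_nonneg f)

lemma absApply_bddAbove (f : E →L[ℝ] ℝ) {y : E} (hy : 0 ≤ y) :
    BddAbove ((fun z => f z) '' {z : E | -y ≤ z ∧ z ≤ y}) :=
  ⟨‖f‖ * ‖y‖, fun r hr => absApply_set_bound f hy r hr⟩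

lemma absApply_nonneg (f : E →L[ℝ] ℝ) {y : E} (hy : 0 ≤ y) : 0 ≤ absApply f y := by
  have h := le_csSup (absApply_bddAbove f hy) (⟨0, ⟨neg_nonpos.mpr hy, hy⟩, rfl⟩ :
    f 0 ∈ (fun z => f z) '' {z : E | -y ≤ z ∧ z ≤ y})
  simp only [absApply]
  simpa using h

lemma absApply_zero (f : E →L[ℝ] ℝ) : absApply f 0 = 0 := by
  refine le_antisymm ?_ (absApply_nonneg f le_rfl)
  simp only [absApply]
  apply csSup_le (absApply_set_nonempty f le_rfl)
  rintro r ⟨z, ⟨hz1, hz2⟩, rfl⟩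
  have hz : z = 0 := le_antisymm hz2 (by simpa using hz1)
  simp [hz]

lemma absApply_mono (f : E →L[ℝ] ℝ) {y y' : E} (hy : 0 ≤ y) (h : y ≤ y') :
    absApply f y ≤ absApply f y' := by
  simp only [absApply]
  apply csSup_le_csSup (absApply_bddAbove f (hy.trans h)) (absApply_set_nonempty f hy)
  rintro r ⟨z, ⟨h1, h2⟩, rfl⟩
  exact ⟨z, ⟨le_trans (neg_le_neg h) h1, h2.trans h⟩, rfl⟩

lemma absApply_add (f : E →L[ℝ] ℝ) {y z : E} (hy : 0 ≤ y) (hz : 0 ≤ z) :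
    absApply f (y + z) = absApply f y + absApply f z := by
  have hyz : 0 ≤ y + z := add_nonneg hy hz
  apply le_antisymm
  · simp only [absApply]
    apply csSup_le (absApply_set_nonempty f hyz)
    rintro r ⟨w, ⟨h1, h2⟩, rfl⟩
    obtain ⟨w₁, w₂, rfl, e1, e2, e3, e4⟩ := aux_riesz hy hz h1 h2
    beta_reduce
    rw [map_add]
    exact add_le_add (le_csSup (absApply_bddAbove f hy) ⟨w₁, ⟨e1, e2⟩, rfl⟩)
      (le_csSup (absApply_bddAbove f hz) ⟨w₂, ⟨e3, e4⟩, rfl⟩)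
  · simp only [absApply]
    rw [← le_sub_iff_add_le]
    apply csSup_le (absApply_set_nonempty f hy)
    rintro a ⟨w₁, ⟨h1, h2⟩, rfl⟩
    rw [le_sub_iff_add_le, add_comm, ← le_sub_iff_add_le]
    apply csSup_le (absApply_set_nonempty f hz)
    rintro b ⟨w₂, ⟨h3, h4⟩, rfl⟩
    beta_reduce
    rw [le_sub_iff_add_le, add_comm, ← map_add]
    refine le_csSup (absApply_bddAbove f hyz) ⟨w₁ + w₂, ⟨?_, add_le_add h2 h4⟩, rfl⟩
    rw [neg_add]
    exact add_le_add h1 h3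

lemma absApply_comp_le (f : F →L[ℝ] ℝ) (S : E →L[ℝ] F) (hS : ∀ x : E, 0 ≤ x → 0 ≤ S x)
    {y : E} (hy : 0 ≤ y) : absApply (f.comp S) y ≤ absApply f (S y) := by
  simp only [absApply]
  apply csSup_le (absApply_set_nonempty (f.comp S) hy)
  rintro r ⟨z, ⟨h1, h2⟩, rfl⟩
  have hz2 : S z ≤ S y := by
    have := hS _ (sub_nonneg.mpr h2)
    rw [map_sub] at this
    exact sub_nonneg.mp this
  have hz1 : -S y ≤ S z := by
    have h0 : 0 ≤ z + y := by
      have := add_le_add_left h1 y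
      simpa using this
    have := hS _ h0
    rw [map_add] at this
    have h5 : (0 : F) + -S y ≤ S z + S y + -S y := add_le_add_left this _
    simpa using h5
  exact le_csSup (absApply_bddAbove f (hS y hy)) ⟨S z, ⟨hz1, hz2⟩, rfl⟩

/-- The modulus of a functional, as an additive monoid hom. -/
noncomputable def modulusAux (f : E →L[ℝ] ℝ) : E →+ ℝ :=
  AddMonoidHom.mk' (fun u => absApply f u⁺ - absApply f u⁻) (by
    intro u v
    beta_reduce
    have key : (u + v)⁺ + u⁻ + v⁻ = (u + v)⁻ + u⁺ + v⁺ := by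
      have h1 := posPart_sub_negPart (u + v)
      have h2 := posPart_sub_negPart u
      have h3 := posPart_sub_negPart v
      have h4 : (u + v)⁺ + u⁻ + v⁻ - ((u + v)⁻ + u⁺ + v⁺) = 0 := by
        calc (u + v)⁺ + u⁻ + v⁻ - ((u + v)⁻ + u⁺ + v⁺)
            = ((u + v)⁺ - (u + v)⁻) - (u⁺ - u⁻) - (v⁺ - v⁻) := by abel
          _ = (u + v) - u - v := by rw [h1, h2, h3]
          _ = 0 := by abel
      exact sub_eq_zero.mp h4
    have h5 : absApply f ((u + v)⁺ + u⁻ + v⁻) = absApply f ((u + v)⁻ + u⁺ + v⁺) := by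
      rw [key]
    rw [absApply_add f (add_nonneg (posPart_nonneg _) (negPart_nonneg _)) (negPart_nonneg _),
        absApply_add f (posPart_nonneg _) (negPart_nonneg _),
        absApply_add f (add_nonneg (negPart_nonneg _) (posPart_nonneg _)) (posPart_nonneg _),
        absApply_add f (negPart_nonneg _) (posPart_nonneg _)] at h5
    linarith)

lemma modulusAux_bound (f : E →L[ℝ] ℝ) (u : E) : ‖modulusAux f u‖ ≤ (2 * ‖f‖) * ‖u‖ := by
  have hpos : u⁺ ≤ |u| := sup_le (le_abs_self u) (abs_nonneg u)
  have hneg : u⁻ ≤ |u| := sup_le (neg_le_abs u) (abs_nonneg u)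
  have h1 : ‖u⁺‖ ≤ ‖u‖ := by
    have : |u⁺| ≤ |u| := by rwa [abs_of_nonneg (posPart_nonneg u)]
    exact norm_le_norm_of_abs_le_abs this
  have h2 : ‖u⁻‖ ≤ ‖u‖ := by
    have : |u⁻| ≤ |u| := by rwa [abs_of_nonneg (negPart_nonneg u)]
    exact norm_le_norm_of_abs_le_abs this
  have b1 : absApply f u⁺ ≤ ‖f‖ * ‖u‖ := by
    refine (csSup_le (absApply_set_nonempty f (posPart_nonneg u))
      (absApply_set_bound f (posPart_nonneg u))).trans ?_
    exact mul_le_mul_of_nonneg_left h1 (norm_nonneg f)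
  have b2 : absApply f u⁻ ≤ ‖f‖ * ‖u‖ := by
    refine (csSup_le (absApply_set_nonempty f (negPart_nonneg u))
      (absApply_set_bound f (negPart_nonneg u))).trans ?_
    exact mul_le_mul_of_nonneg_left h2 (norm_nonneg f)
  have n1 : 0 ≤ absApply f u⁺ := absApply_nonneg f (posPart_nonneg u)
  have n2 : 0 ≤ absApply f u⁻ := absApply_nonneg f (negPart_nonneg u)
  have : modulusAux f u = absApply f u⁺ - absApply f u⁻ := rfl
  rw [this, Real.norm_eq_abs]
  rw [abs_le]
  constructor <;> nlinarith

/-- The modulus of a functional, as a continuous linear functional. -/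
noncomputable def modulusCLM (f : E →L[ℝ] ℝ) : E →L[ℝ] ℝ :=
  (modulusAux f).toRealLinearMap
    (AddMonoidHomClass.continuous_of_bound (modulusAux f) (2 * ‖f‖) (modulusAux_bound f))

lemma modulusCLM_apply (f : E →L[ℝ] ℝ) {w : E} (hw : 0 ≤ w) :
    modulusCLM f w = absApply f w := by
  have : modulusCLM f w = absApply f w⁺ - absApply f w⁻ := rfl
  rw [this, posPart_eq_self.mpr hw, negPart_eq_zero.mpr hw, absApply_zero, sub_zero]

lemma modulusCLM_pos (f : E →L[ℝ] ℝ) : PositiveFunctional (modulusCLM f) := by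
  intro w hw
  rw [modulusCLM_apply f hw]
  exact absApply_nonneg f hw

/-- The Riesz–Kantorovich infimum-type expression. -/
noncomputable def infC (p q : E → ℝ) (z : E) : ℝ :=
  sInf {r : ℝ | ∃ w : E, 0 ≤ w ∧ w ≤ z ∧ r = p w + q (z - w)}

lemma infModApply_eq_infC (f : E →L[ℝ] ℝ) (g : E →L[ℝ] ℝ) (x : E) :
    infModApply f g x = infC (absApply f) (fun w => g w) x := rfl

lemma infC_bddBelow {p q : E → ℝ} (hp : ∀ w, 0 ≤ w → 0 ≤ p w) (hq : ∀ w, 0 ≤ w → 0 ≤ q w)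
    (z : E) : BddBelow {r : ℝ | ∃ w : E, 0 ≤ w ∧ w ≤ z ∧ r = p w + q (z - w)} := by
  refine ⟨0, ?_⟩
  rintro r ⟨w, h1, h2, rfl⟩
  exact add_nonneg (hp w h1) (hq _ (sub_nonneg.mpr h2))

lemma infC_le {p q : E → ℝ} (hp : ∀ w, 0 ≤ w → 0 ≤ p w) (hq : ∀ w, 0 ≤ w → 0 ≤ q w)
    {z w : E} (h1 : 0 ≤ w) (h2 : w ≤ z) : infC p q z ≤ p w + q (z - w) :=
  csInf_le (infC_bddBelow hp hq z) ⟨w, h1, h2, rfl⟩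

lemma infC_set_nonempty {p q : E → ℝ} {z : E} (hz : 0 ≤ z) :
    {r : ℝ | ∃ w : E, 0 ≤ w ∧ w ≤ z ∧ r = p w + q (z - w)}.Nonempty :=
  ⟨p 0 + q (z - 0), ⟨0, le_rfl, hz, rfl⟩⟩

lemma le_infC {p q : E → ℝ} {c : ℝ} {z : E} (hz : 0 ≤ z)
    (h : ∀ w, 0 ≤ w → w ≤ z → c ≤ p w + q (z - w)) : c ≤ infC p q z := by
  simp only [infC]
  apply le_csInf (infC_set_nonempty hz)
  rintro r ⟨w, h1, h2, rfl⟩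
  exact h w h1 h2

lemma infC_nonneg {p q : E → ℝ} (hp : ∀ w, 0 ≤ w → 0 ≤ p w) (hq : ∀ w, 0 ≤ w → 0 ≤ q w)
    {z : E} (hz : 0 ≤ z) : 0 ≤ infC p q z :=
  le_infC hz fun w h1 h2 => add_nonneg (hp w h1) (hq _ (sub_nonneg.mpr h2))

lemma infC_le_infC {p q p' q' : E → ℝ} (hp : ∀ w, 0 ≤ w → 0 ≤ p w)
    (hq : ∀ w, 0 ≤ w → 0 ≤ q w) {z : E} (hz : 0 ≤ z)
    (hcmp : ∀ w, 0 ≤ w → w ≤ z → p w + q (z - w) ≤ p' w + q' (z - w)) :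
    infC p q z ≤ infC p' q' z :=
  le_infC hz fun w h1 h2 => (infC_le hp hq h1 h2).trans (hcmp w h1 h2)

lemma infC_comm {p q : E → ℝ} (z : E) : infC p q z = infC q p z := by
  have hsub : ∀ p q : E → ℝ, {r : ℝ | ∃ w : E, 0 ≤ w ∧ w ≤ z ∧ r = p w + q (z - w)} ⊆
      {r : ℝ | ∃ w : E, 0 ≤ w ∧ w ≤ z ∧ r = q w + p (z - w)} := by
    intro p q r hr
    obtain ⟨w, h1, h2, rfl⟩ := hr
    exact ⟨z - w, sub_nonneg.mpr h2, sub_le_self z h1, by rw [sub_sub_cancel]; ring⟩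
  simp only [infC]
  rw [Set.Subset.antisymm (hsub p q) (hsub q p)]

lemma infC_add {p q : E → ℝ} (hp0 : ∀ w, 0 ≤ w → 0 ≤ p w) (hq0 : ∀ w, 0 ≤ w → 0 ≤ q w)
    (hpa : ∀ u v, 0 ≤ u → 0 ≤ v → p (u + v) = p u + p v)
    (hqa : ∀ u v, 0 ≤ u → 0 ≤ v → q (u + v) = q u + q v)
    {z₁ z₂ : E} (h1 : 0 ≤ z₁) (h2 : 0 ≤ z₂) :
    infC p q (z₁ + z₂) = infC p q z₁ + infC p q z₂ := by
  apply le_antisymm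
  · rw [← sub_le_iff_le_add]
    apply le_infC h1
    intro w₁ hw1 hw1'
    rw [sub_le_iff_le_add, ← sub_le_iff_le_add']
    apply le_infC h2
    intro w₂ hw2 hw2'
    rw [sub_le_iff_le_add']
    have e : z₁ + z₂ - (w₁ + w₂) = (z₁ - w₁) + (z₂ - w₂) := by abel
    have key := infC_le hp0 hq0 (add_nonneg hw1 hw2) (add_le_add hw1' hw2') (z := z₁ + z₂)
    rw [e, hpa _ _ hw1 hw2, hqa _ _ (sub_nonneg.mpr hw1') (sub_nonneg.mpr hw2')] at key
    linarith
  · apply le_infC (add_nonneg h1 h2)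
    intro w hw hw'
    obtain ⟨w₁, w₂, e1, e2, e3, e4, rfl⟩ := aux_riesz_pos hw h1 h2 hw'
    have e : z₁ + z₂ - (w₁ + w₂) = (z₁ - w₁) + (z₂ - w₂) := by abel
    rw [e, hpa _ _ e1 e3, hqa _ _ (sub_nonneg.mpr e2) (sub_nonneg.mpr e4)]
    have i1 := infC_le hp0 hq0 e1 e2 (z := z₁)
    have i2 := infC_le hp0 hq0 e3 e4 (z := z₂)
    linarith

lemma infC_subadd_right {A g1 g2 : E → ℝ} {x : E} (hx : 0 ≤ x)
    (hA0 : ∀ w, 0 ≤ w → 0 ≤ A w)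
    (hAmono : ∀ w w', 0 ≤ w → w ≤ w' → A w ≤ A w')
    (hAsub : ∀ u v, 0 ≤ u → 0 ≤ v → A (u + v) ≤ A u + A v)
    (h10 : ∀ w, 0 ≤ w → 0 ≤ g1 w) (h20 : ∀ w, 0 ≤ w → 0 ≤ g2 w)
    (h1mono : ∀ w w', 0 ≤ w → w ≤ w' → g1 w ≤ g1 w')
    (h2mono : ∀ w w', 0 ≤ w → w ≤ w' → g2 w ≤ g2 w') :
    infC A (fun w => g1 w + g2 w) x ≤ infC A g1 x + infC A g2 x := by
  rw [← sub_le_iff_le_add]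
  apply le_infC hx
  intro w₁ hw11 hw12
  rw [sub_le_iff_le_add, ← sub_le_iff_le_add']
  apply le_infC hx
  intro w₂ hw21 hw22
  rw [sub_le_iff_le_add']
  have hw0 : 0 ≤ w₁ ⊔ w₂ := le_trans hw11 le_sup_left
  have hwx : w₁ ⊔ w₂ ≤ x := sup_le hw12 hw22
  have key := infC_le (p := A) (q := fun w => g1 w + g2 w) hA0
    (fun w hw => add_nonneg (h10 w hw) (h20 w hw)) hw0 hwx
  have hAle : A (w₁ ⊔ w₂) ≤ A w₁ + A w₂ := by
    have hle : w₁ ⊔ w₂ ≤ w₁ + w₂ :=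
      sup_le (le_add_of_nonneg_right hw21) (le_add_of_nonneg_left hw11)
    exact (hAmono _ _ hw0 hle).trans (hAsub _ _ hw11 hw21)
  have hg1 : g1 (x - w₁ ⊔ w₂) ≤ g1 (x - w₁) :=
    h1mono _ _ (sub_nonneg.mpr hwx) (sub_le_sub_left le_sup_left x)
  have hg2 : g2 (x - w₁ ⊔ w₂) ≤ g2 (x - w₂) :=
    h2mono _ _ (sub_nonneg.mpr hwx) (sub_le_sub_left le_sup_right x)
  have key' : infC A (fun w => g1 w + g2 w) x ≤
      A (w₁ ⊔ w₂) + (g1 (x - w₁ ⊔ w₂) + g2 (x - w₁ ⊔ w₂)) := key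
  linarith

section Proj

variable (S : F →L[ℝ] G) (g : F →L[ℝ] ℝ)

/-- `g ∧ S'h` via the Riesz–Kantorovich formula. -/
noncomputable def rP (h : G →L[ℝ] ℝ) (z : F) : ℝ :=
  infC (fun w => g w) (fun w => h (S w)) z

/-- The band projection of `g` onto the band generated by the range of `S'`, pointwise. -/
noncomputable def g1P (z : F) : ℝ :=
  sSup {t : ℝ | ∃ h : G →L[ℝ] ℝ, PositiveFunctional h ∧ t = rP S g h z}

/-- The disjoint complement part of `g`, pointwise. -/
noncomputable def g2P (z : F) : ℝ := g z - g1P S g z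

variable {S g}
variable (hSpos : ∀ x : F, 0 ≤ x → 0 ≤ S x) (hg : PositiveFunctional g)

lemma CLM_pos_zero : PositiveFunctional (0 : G →L[ℝ] ℝ) := fun w _ => by simp

include hSpos hg

lemma rP_nonneg {h : G →L[ℝ] ℝ} (hh : PositiveFunctional h) {z : F} (hz : 0 ≤ z) :
    0 ≤ rP S g h z :=
  infC_nonneg (fun w hw => hg w hw) (fun w hw => hh _ (hSpos w hw)) hz

lemma rP_le_g {h : G →L[ℝ] ℝ} (hh : PositiveFunctional h) {z : F} (hz : 0 ≤ z) :
    rP S g h z ≤ g z := by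
  have := infC_le (p := fun w => g w) (q := fun w => h (S w))
    (fun w hw => hg w hw) (fun w hw => hh _ (hSpos w hw)) hz le_rfl
  simpa [rP] using this

lemma rP_le_hS {h : G →L[ℝ] ℝ} (hh : PositiveFunctional h) {z : F} (hz : 0 ≤ z) :
    rP S g h z ≤ h (S z) := by
  have := infC_le (p := fun w => g w) (q := fun w => h (S w))
    (fun w hw => hg w hw) (fun w hw => hh _ (hSpos w hw)) le_rfl hz
  simpa [rP] using this

lemma rP_mono_h {h h' : G →L[ℝ] ℝ} (hh : PositiveFunctional h)
    (hle : ∀ w : G, 0 ≤ w → h w ≤ h' w) {z : F} (hz : 0 ≤ z) :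
    rP S g h z ≤ rP S g h' z :=
  infC_le_infC (fun w hw => hg w hw) (fun w hw => hh _ (hSpos w hw)) hz
    (fun w hw hw' => by
      have := hle _ (hSpos _ (sub_nonneg.mpr hw'))
      linarith)

lemma rP_add {h : G →L[ℝ] ℝ} (hh : PositiveFunctional h) {z₁ z₂ : F}
    (h1 : 0 ≤ z₁) (h2 : 0 ≤ z₂) :
    rP S g h (z₁ + z₂) = rP S g h z₁ + rP S g h z₂ :=
  infC_add (fun w hw => hg w hw) (fun w hw => hh _ (hSpos w hw))
    (fun u v _ _ => by rw [map_add]) (fun u v _ _ => by rw [map_add, map_add]) h1 h2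

lemma g1P_set_nonempty (z : F) :
    {t : ℝ | ∃ h : G →L[ℝ] ℝ, PositiveFunctional h ∧ t = rP S g h z}.Nonempty :=
  ⟨rP S g 0 z, 0, CLM_pos_zero, rfl⟩

lemma g1P_set_bddAbove {z : F} (hz : 0 ≤ z) :
    BddAbove {t : ℝ | ∃ h : G →L[ℝ] ℝ, PositiveFunctional h ∧ t = rP S g h z} := by
  refine ⟨g z, ?_⟩
  rintro t ⟨h, hh, rfl⟩
  exact rP_le_g hSpos hg hh hz

lemma rP_le_g1P {h : G →L[ℝ] ℝ} (hh : PositiveFunctional h) {z : F} (hz : 0 ≤ z) :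
    rP S g h z ≤ g1P S g z :=
  le_csSup (g1P_set_bddAbove hSpos hg hz) ⟨h, hh, rfl⟩

lemma g1P_nonneg {z : F} (hz : 0 ≤ z) : 0 ≤ g1P S g z :=
  (rP_nonneg hSpos hg CLM_pos_zero hz).trans (rP_le_g1P hSpos hg CLM_pos_zero hz)

lemma g1P_le_g {z : F} (hz : 0 ≤ z) : g1P S g z ≤ g z := by
  apply csSup_le (g1P_set_nonempty hSpos hg z)
  rintro t ⟨h, hh, rfl⟩
  exact rP_le_g hSpos hg hh hz

lemma g1P_add {z₁ z₂ : F} (h1 : 0 ≤ z₁) (h2 : 0 ≤ z₂) :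
    g1P S g (z₁ + z₂) = g1P S g z₁ + g1P S g z₂ := by
  apply le_antisymm
  · apply csSup_le (g1P_set_nonempty hSpos hg (z₁ + z₂))
    rintro t ⟨h, hh, rfl⟩
    rw [rP_add hSpos hg hh h1 h2]
    exact add_le_add (rP_le_g1P hSpos hg hh h1) (rP_le_g1P hSpos hg hh h2)
  · rw [← le_sub_iff_add_le]
    apply csSup_le (g1P_set_nonempty hSpos hg z₁)
    rintro t ⟨h₁, hh₁, rfl⟩
    rw [le_sub_iff_add_le, add_comm, ← le_sub_iff_add_le]
    apply csSup_le (g1P_set_nonempty hSpos hg z₂)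
    rintro t ⟨h₂, hh₂, rfl⟩
    rw [le_sub_iff_add_le]
    have hsum : PositiveFunctional (h₁ + h₂) := fun w hw => by
      have := add_nonneg (hh₁ w hw) (hh₂ w hw)
      simpa using this
    have m1 : rP S g h₁ z₁ ≤ rP S g (h₁ + h₂) z₁ :=
      rP_mono_h hSpos hg hh₁ (fun w hw => by
        have := hh₂ w hw
        simp only [ContinuousLinearMap.add_apply]
        linarith) h1
    have m2 : rP S g h₂ z₂ ≤ rP S g (h₁ + h₂) z₂ :=
      rP_mono_h hSpos hg hh₂ (fun w hw => by
        have := hh₁ w hw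
        simp only [ContinuousLinearMap.add_apply]
        linarith) h2
    have madd := rP_add hSpos hg hsum h1 h2
    have mle : rP S g (h₁ + h₂) (z₁ + z₂) ≤ g1P S g (z₁ + z₂) :=
      rP_le_g1P hSpos hg hsum (add_nonneg h1 h2)
    linarith

lemma g1P_mono {z z' : F} (hz : 0 ≤ z) (h : z ≤ z') : g1P S g z ≤ g1P S g z' := by
  have e : z + (z' - z) = z' := by abel
  calc g1P S g z ≤ g1P S g z + g1P S g (z' - z) :=
        le_add_of_nonneg_right (g1P_nonneg hSpos hg (sub_nonneg.mpr h))
    _ = g1P S g (z + (z' - z)) := (g1P_add hSpos hg hz (sub_nonneg.mpr h)).symm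
    _ = g1P S g z' := by rw [e]

lemma g2P_nonneg {z : F} (hz : 0 ≤ z) : 0 ≤ g2P S g z :=
  sub_nonneg.mpr (g1P_le_g hSpos hg hz)

lemma g2P_add {z₁ z₂ : F} (h1 : 0 ≤ z₁) (h2 : 0 ≤ z₂) :
    g2P S g (z₁ + z₂) = g2P S g z₁ + g2P S g z₂ := by
  simp only [g2P]
  rw [map_add, g1P_add hSpos hg h1 h2]
  ring

lemma g2P_mono {z z' : F} (hz : 0 ≤ z) (h : z ≤ z') : g2P S g z ≤ g2P S g z' := by
  have e : z + (z' - z) = z' := by abel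
  calc g2P S g z ≤ g2P S g z + g2P S g (z' - z) :=
        le_add_of_nonneg_right (g2P_nonneg hSpos hg (sub_nonneg.mpr h))
    _ = g2P S g (z + (z' - z)) := (g2P_add hSpos hg hz (sub_nonneg.mpr h)).symm
    _ = g2P S g z' := by rw [e]

/-- Key disjointness lemma: `g₂` is disjoint from `S'h` for every positive `h`. -/
lemma g2P_disj {h : G →L[ℝ] ℝ} (hh : PositiveFunctional h) {z : F} (hz : 0 ≤ z) :
    infC (g2P S g) (fun w => h (S w)) z = 0 := by
  set D := infC (g2P S g) (fun w => h (S w)) z with hD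
  have hD0 : 0 ≤ D :=
    infC_nonneg (fun w hw => g2P_nonneg hSpos hg hw) (fun w hw => hh _ (hSpos w hw)) hz
  have key : ∀ h' : G →L[ℝ] ℝ, PositiveFunctional h' →
      rP S g h' z + D ≤ rP S g (h' + h) z := by
    intro h' hh'
    apply le_infC hz
    intro w hw hw'
    have c2 : D ≤ g2P S g w + h (S (z - w)) :=
      infC_le (fun w hw => g2P_nonneg hSpos hg hw) (fun w hw => hh _ (hSpos w hw)) hw hw'
    have c1 : rP S g h' z ≤ g1P S g w + h' (S (z - w)) := by
      have c1a : rP S g h' z - h' (S (z - w)) ≤ rP S g h' w := by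
        apply le_infC hw
        intro w' hw1 hw2
        rw [sub_le_iff_le_add]
        have e : S (w - w') + S (z - w) = S (z - w') := by
          rw [← map_add]
          congr 1
          abel
        have hle : rP S g h' z ≤ g w' + h' (S (z - w')) := by
          have := infC_le (p := fun w => g w) (q := fun w => h' (S w))
            (fun w hw => hg w hw) (fun w hw => hh' _ (hSpos w hw)) hw1 (hw2.trans hw')
          simpa [rP] using this
        rw [← e, map_add] at hle
        beta_reduce
        linarith
      have c1b : rP S g h' w ≤ g1P S g w := rP_le_g1P hSpos hg hh' hw
      linarith
    have hgw : g w = g1P S g w + g2P S g w := by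
      simp only [g2P]
      ring
    have happ : (h' + h) (S (z - w)) = h' (S (z - w)) + h (S (z - w)) := by
      simp [ContinuousLinearMap.add_apply]
    beta_reduce
    rw [happ, hgw]
    linarith
  have hub : ∀ h' : G →L[ℝ] ℝ, PositiveFunctional h' → rP S g h' z ≤ g1P S g z - D := by
    intro h' hh'
    have h1 := key h' hh'
    have hsum : PositiveFunctional (h' + h) := fun w hw => by
      have := add_nonneg (hh' w hw) (hh w hw)
      simpa using this
    have h2 : rP S g (h' + h) z ≤ g1P S g z := rP_le_g1P hSpos hg hsum hz
    linarith
  have hfinal : g1P S g z ≤ g1P S g z - D := by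
    apply csSup_le (g1P_set_nonempty hSpos hg z)
    rintro t ⟨h', hh', rfl⟩
    exact hub h' hh'
  linarith

end Proj

/-- The adjoint of an interval preserving operator maps uaw*-null sequences to
uaw*-null sequences. -/
lemma uawStarNull_comp (S : F →L[ℝ] G) (hS : IntervalPreserving S) (f : ℕ → G →L[ℝ] ℝ)
    (hu : UawStarNull f) : UawStarNull (fun n => (f n).comp S) := by
  obtain ⟨hSpos, hSint⟩ := hS
  intro g hg x hx
  rw [Metric.tendsto_atTop]
  intro ε hε
  -- choose a near-optimal positive functional h
  have hlt : g1P S g x - ε / 2 < sSup {t : ℝ | ∃ h : G →L[ℝ] ℝ,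
      PositiveFunctional h ∧ t = rP S g h x} := by
    have : g1P S g x - ε / 2 < g1P S g x := by linarith
    exact this
  obtain ⟨t, ⟨h, hh, rfl⟩, hth⟩ :=
    exists_lt_of_lt_csSup (g1P_set_nonempty hSpos hg x) hlt
  -- the uaw*-null hypothesis applied to h at S x
  have hb := hu h hh (S x) (hSpos x hx)
  rw [Metric.tendsto_atTop] at hb
  obtain ⟨N, hN⟩ := hb (ε / 2) (by linarith)
  refine ⟨N, fun n hn => ?_⟩
  have hbn := hN n hn
  rw [Real.dist_eq, sub_zero] at hbn
  have hbn' : infModApply (f n) h (S x) < ε / 2 := lt_of_abs_lt hbn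
  -- notation
  set A : F → ℝ := fun w => absApply (f n) (S w) with hA
  have hA0 : ∀ w, 0 ≤ w → 0 ≤ A w := fun w hw => absApply_nonneg (f n) (hSpos w hw)
  have hAmono : ∀ w w', 0 ≤ w → w ≤ w' → A w ≤ A w' := by
    intro w w' hw hle
    apply absApply_mono (f n) (hSpos w hw)
    have := hSpos _ (sub_nonneg.mpr hle)
    rw [map_sub] at this
    exact sub_nonneg.mp this
  have hAadd : ∀ u v, 0 ≤ u → 0 ≤ v → A (u + v) = A u + A v := by
    intro u v hu' hv'
    simp only [hA, map_add]
    exact absApply_add (f n) (hSpos u hu') (hSpos v hv')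
  -- pointwise facts about g1P/g2P
  have h10 : ∀ w, 0 ≤ w → 0 ≤ g1P S g w := fun w hw => g1P_nonneg hSpos hg hw
  have h20 : ∀ w, 0 ≤ w → 0 ≤ g2P S g w := fun w hw => g2P_nonneg hSpos hg hw
  have h1mono : ∀ w w', 0 ≤ w → w ≤ w' → g1P S g w ≤ g1P S g w' :=
    fun w w' hw hle => g1P_mono hSpos hg hw hle
  have h2mono : ∀ w w', 0 ≤ w → w ≤ w' → g2P S g w ≤ g2P S g w' :=
    fun w w' hw hle => g2P_mono hSpos hg hw hle
  -- step 0 : compare with A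
  have step0 : infModApply ((f n).comp S) g x ≤ infC A (fun w => g w) x := by
    rw [infModApply_eq_infC]
    apply infC_le_infC (fun w hw => absApply_nonneg _ hw) (fun w hw => hg w hw) hx
    intro w hw hw'
    have := absApply_comp_le (f n) S hSpos hw
    simp only [hA]
    linarith
  -- step 1 : split g into g1P + g2P
  have egsum : (fun w => g w) = fun w : F => g1P S g w + g2P S g w := by
    funext w
    simp only [g2P]
    ring
  have step1 : infC A (fun w => g w) x ≤ infC A (g1P S g) x + infC A (g2P S g) x := by
    rw [egsum]
    exact infC_subadd_right hx hA0 hAmono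
      (fun u v hu' hv' => le_of_eq (hAadd u v hu' hv')) h10 h20 h1mono h2mono
  -- step 2 : the g2P part vanishes
  have step2 : infC A (g2P S g) x ≤ 0 := by
    have e2a : infC A (g2P S g) x = infC (g2P S g) A x := infC_comm x
    have e2b : infC (g2P S g) A x ≤ infC (g2P S g) (fun w => modulusCLM (f n) (S w)) x := by
      apply infC_le_infC h20 (fun w hw => hA0 w hw) hx
      intro w hw hw'
      have := modulusCLM_apply (f n) (hSpos _ (sub_nonneg.mpr hw'))
      simp only [hA]
      rw [this]
    have e2c := g2P_disj hSpos hg (modulusCLM_pos (f n)) hx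
    rw [e2a]
    rw [e2c] at e2b
    exact e2b
  -- step 3 : replace g1P by rP h, paying the sup defect
  have step3 : infC A (g1P S g) x ≤ infC A (rP S g h) x + (g1P S g x - rP S g h x) := by
    rw [← sub_le_iff_le_add]
    apply le_infC hx
    intro w hw hw'
    have i1 : infC A (g1P S g) x ≤ A w + g1P S g (x - w) :=
      infC_le hA0 h10 hw hw'
    have e : (x - w) + w = x := by abel
    have eg1 : g1P S g x = g1P S g (x - w) + g1P S g w := by
      conv_lhs => rw [← e]
      exact g1P_add hSpos hg (sub_nonneg.mpr hw') hw
    have erh : rP S g h x = rP S g h (x - w) + rP S g h w := by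
      conv_lhs => rw [← e]
      exact rP_add hSpos hg hh (sub_nonneg.mpr hw') hw
    have hrg1 : rP S g h w ≤ g1P S g w := rP_le_g1P hSpos hg hh hw
    have hrg2 : rP S g h (x - w) ≤ g1P S g (x - w) :=
      rP_le_g1P hSpos hg hh (sub_nonneg.mpr hw')
    beta_reduce
    linarith
  -- step 4 : replace rP h by h ∘ S
  have step4 : infC A (rP S g h) x ≤ infC A (fun w => h (S w)) x := by
    apply infC_le_infC hA0 (fun w hw => rP_nonneg hSpos hg hh hw) hx
    intro w hw hw'
    have := rP_le_hS hSpos hg hh (sub_nonneg.mpr hw')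
    linarith
  -- step 5 : use interval preservation to pass to S x
  have step5 : infC A (fun w => h (S w)) x ≤ infModApply (f n) h (S x) := by
    rw [infModApply_eq_infC]
    apply le_infC (hSpos x hx)
    intro v hv1 hv2
    beta_reduce
    have hmem : v ∈ Set.Icc (0 : G) (S x) := ⟨hv1, hv2⟩
    rw [← hSint x hx] at hmem
    obtain ⟨w, ⟨hw1, hw2⟩, hwv⟩ := hmem
    have i1 : infC A (fun w => h (S w)) x ≤ A w + h (S (x - w)) :=
      infC_le hA0 (fun w hw => hh _ (hSpos w hw)) hw1 hw2
    have e1 : A w = absApply (f n) v := by simp only [hA]; rw [hwv]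
    have e2 : S (x - w) = S x - v := by rw [map_sub, hwv]
    rw [e1, e2] at i1
    exact i1
  -- assemble
  have hnn : 0 ≤ infModApply ((f n).comp S) g x := by
    rw [infModApply_eq_infC]
    exact infC_nonneg (fun w hw => absApply_nonneg _ hw) (fun w hw => hg w hw) hx
  have hchain : infModApply ((f n).comp S) g x < ε := by
    have : infModApply ((f n).comp S) g x ≤
        infModApply (f n) h (S x) + (g1P S g x - rP S g h x) := by linarith
    have hdef : g1P S g x - rP S g h x < ε / 2 := by
      have : g1P S g x - ε / 2 < rP S g h x := hth
      linarith
    linarith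
  rw [Real.dist_eq, sub_zero, abs_of_nonneg hnn]
  exact hchain

/-- Precomposition by `S` as a continuous linear map between dual spaces. -/
noncomputable def precompCLM {E F : Type*} [NormedAddCommGroup E] [NormedSpace ℝ E]
    [NormedAddCommGroup F] [NormedSpace ℝ F] (S : E →L[ℝ] F) :
    (F →L[ℝ] ℝ) →L[ℝ] (E →L[ℝ] ℝ) :=
  LinearMap.mkContinuous
    { toFun := fun gg => gg.comp S
      map_add' := fun a b => by ext z; simp
      map_smul' := fun c a => by ext z; simp }
    ‖S‖ (fun gg => by
      rw [mul_comm]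
      exact ContinuousLinearMap.opNorm_comp_le gg S)

end Aux

theorem ugo_ideal_properties {E F G : Type*} [NormedAddCommGroup E] [Lattice E] [HasSolidNorm E] [IsOrderedAddMonoid E] [NormedSpace ℝ E] [CompleteSpace E]
    [NormedAddCommGroup F] [Lattice F] [HasSolidNorm F] [IsOrderedAddMonoid F] [NormedSpace ℝ F] [CompleteSpace F]
    [NormedAddCommGroup G] [Lattice G] [HasSolidNorm G] [IsOrderedAddMonoid G] [NormedSpace ℝ G] [CompleteSpace G] :
    (∀ (T : F →L[ℝ] G) (S : E →L[ℝ] F), UGO T → UGO (T.comp S)) ∧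
      (∀ (T : E →L[ℝ] F) (S : F →L[ℝ] G), UGO T → IntervalPreserving S →
        UGO (S.comp T)) := by
  constructor
  · intro T S hT f hb hu Φ
    exact hT f hb hu (Φ.comp (precompCLM S))
  · intro T S hT hS f hb hu
    obtain ⟨C, hC⟩ := hb
    have hb' : NormBounded (fun n => (f n).comp S) := by
      refine ⟨C * ‖S‖, fun n => ?_⟩
      exact (ContinuousLinearMap.opNorm_comp_le _ _).trans
        (mul_le_mul_of_nonneg_right (hC n) (norm_nonneg S))
    have hu' : UawStarNull (fun n => (f n).comp S) := uawStarNull_comp S hS f hu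
    exact hT _ hb' hu'
end
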